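/- arXiv:1704.02267 — 3 statements merged into one kernel-verified Lean document; each statement's English description precedes it below -/
import Mathlib

section
/- (Uniqueness part of Lemma 3.2) Let R and R' be mn×mn complex matrices such that for all complex λ1, λ2 ≠ i/2 and μ1, μ2 ≠ −i/2: 𝟏^*(A_1^* − μ1 I)^{-1}(A_2^* − μ2 I)^{-1}·R·(A_2 − λ2 I)^{-1}(A_1 − λ1 I)^{-1}·𝟏 = 𝟏^*(A_1^* − μ1 I)^{-1}(A_2^* − μ2 I)^{-1}·R'·(A_2 − λ2 I)^{-1}(A_1 − λ1 I)^{-1}·𝟏. Then R = R'. -/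
open Matrix

noncomputable section

/-- The scalar sequence `a_r`: `0` for `r < 0`, `i/2` for `r = 0`, `i` for `r > 0`. -/
def aC (r : ℤ) : ℂ := if r < 0 then 0 else if r = 0 then Complex.I / 2 else Complex.I

/-- `A_1`: block matrix `{𝒜_{1,p−q}}` with blocks `0`, `(i/2)I_m`, `i·I_m`. -/
def A1 (m n : ℕ) : Matrix (Fin n × Fin m) (Fin n × Fin m) ℂ :=
  Matrix.of fun r c => if r.2 = c.2 then aC (((r.1 : ℕ) : ℤ) - ((c.1 : ℕ) : ℤ)) else 0

/-- `A_2 = diag{𝒜_{2,0}, …, 𝒜_{2,0}}`. -/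
def A2 (m n : ℕ) : Matrix (Fin n × Fin m) (Fin n × Fin m) ℂ :=
  Matrix.of fun r c => if r.1 = c.1 then aC (((r.2 : ℕ) : ℤ) - ((c.2 : ℕ) : ℤ)) else 0

/-- `𝒜_1 = {a_{j−ℓ}}_{j,ℓ=1}^n`. -/
def calA1 (n : ℕ) : Matrix (Fin n) (Fin n) ℂ :=
  Matrix.of fun p q => aC (((p : ℕ) : ℤ) - ((q : ℕ) : ℤ))

/-- `𝒜_2 = {a_{j−ℓ}}_{j,ℓ=1}^m`. -/
def calA2 (m : ℕ) : Matrix (Fin m) (Fin m) ℂ :=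
  Matrix.of fun j l => aC (((j : ℕ) : ℤ) - ((l : ℕ) : ℤ))

/-- The Toeplitz-block Toeplitz matrix `T`, entry `t_{p−q}^{(j−ℓ)}`. -/
def TBT (m n : ℕ) (t : ℤ → ℤ → ℂ) : Matrix (Fin n × Fin m) (Fin n × Fin m) ℂ :=
  Matrix.of fun r c =>
    t (((r.1 : ℕ) : ℤ) - ((c.1 : ℕ) : ℤ)) (((r.2 : ℕ) : ℤ) - ((c.2 : ℕ) : ℤ))

/-- `M_{11}`: block column, `p`-th block `(1/2)𝒯_0 + Σ_{s=1}^{p−1} 𝒯_s`. -/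
def M11 (m n : ℕ) (t : ℤ → ℤ → ℂ) : Matrix (Fin n × Fin m) (Fin m) ℂ :=
  Matrix.of fun r l => (1 / 2 : ℂ) * t 0 (((r.2 : ℕ) : ℤ) - ((l : ℕ) : ℤ))
    + ∑ s ∈ Finset.range (r.1 : ℕ), t ((s : ℤ) + 1) (((r.2 : ℕ) : ℤ) - ((l : ℕ) : ℤ))

/-- `M_{21} = [I_m I_m … I_m]`. -/
def M21 (m n : ℕ) : Matrix (Fin m) (Fin n × Fin m) ℂ :=
  Matrix.of fun j c => if j = c.2 then 1 else 0

/-- `M_{31} = M_{21}^*`. -/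
def M31 (m n : ℕ) : Matrix (Fin n × Fin m) (Fin m) ℂ := (M21 m n)ᴴ

/-- `M_{41}`: block row, `q`-th block `(1/2)𝒯_0 + Σ_{s=1}^{q−1} 𝒯_{−s}`. -/
def M41 (m n : ℕ) (t : ℤ → ℤ → ℂ) : Matrix (Fin m) (Fin n × Fin m) ℂ :=
  Matrix.of fun j c => (1 / 2 : ℂ) * t 0 (((j : ℕ) : ℤ) - ((c.2 : ℕ) : ℤ))
    + ∑ s ∈ Finset.range (c.1 : ℕ), t (-((s : ℤ) + 1)) (((j : ℕ) : ℤ) - ((c.2 : ℕ) : ℤ))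

/-- `j`-th entry of the column `ℳ_{12}^{(r)}`. -/
def m12e (m : ℕ) (t : ℤ → ℤ → ℂ) (r : ℤ) (j : Fin m) : ℂ :=
  (1 / 2 : ℂ) * t r 0 + ∑ s ∈ Finset.range (j : ℕ), t r ((s : ℤ) + 1)

/-- `ℓ`-th entry of the row `ℳ_{42}^{(r)}`. -/
def m42e (m : ℕ) (t : ℤ → ℤ → ℂ) (r : ℤ) (l : Fin m) : ℂ :=
  (1 / 2 : ℂ) * t r 0 + ∑ s ∈ Finset.range (l : ℕ), t r (-((s : ℤ) + 1))

/-- `M_{12} = {ℳ_{12}^{(p−q)}}`. -/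
def M12 (m n : ℕ) (t : ℤ → ℤ → ℂ) : Matrix (Fin n × Fin m) (Fin n) ℂ :=
  Matrix.of fun r q => m12e m t (((r.1 : ℕ) : ℤ) - ((q : ℕ) : ℤ)) r.2

/-- `M_{22}`. -/
def M22 (m n : ℕ) : Matrix (Fin n) (Fin n × Fin m) ℂ :=
  Matrix.of fun p c => if p = c.1 then 1 else 0

/-- `M_{32} = M_{22}^*`. -/
def M32 (m n : ℕ) : Matrix (Fin n × Fin m) (Fin n) ℂ := (M22 m n)ᴴ

/-- `M_{42} = {ℳ_{42}^{(p−q)}}`. -/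
def M42 (m n : ℕ) (t : ℤ → ℤ → ℂ) : Matrix (Fin n) (Fin n × Fin m) ℂ :=
  Matrix.of fun p c => m42e m t (((p : ℕ) : ℤ) - ((c.1 : ℕ) : ℤ)) c.2

/-- `K`: the `1×mn` row, `q`-th block `(1/2)ℳ_{42}^{(0)} + Σ_{s=1}^{q−1} ℳ_{42}^{(−s)}`. -/
def Krow (m n : ℕ) (t : ℤ → ℤ → ℂ) : (Fin n × Fin m) → ℂ :=
  fun c => (1 / 2 : ℂ) * m42e m t 0 c.2
    + ∑ s ∈ Finset.range (c.1 : ℕ), m42e m t (-((s : ℤ) + 1)) c.2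

/-- `K_{11}`: `p`-th row `(1/2)ℳ_{42}^{(0)} + Σ_{s=1}^{p−1} ℳ_{42}^{(s)}`. -/
def K11 (m n : ℕ) (t : ℤ → ℤ → ℂ) : Matrix (Fin n) (Fin m) ℂ :=
  Matrix.of fun p l => (1 / 2 : ℂ) * m42e m t 0 l
    + ∑ s ∈ Finset.range (p : ℕ), m42e m t ((s : ℤ) + 1) l

/-- `K_{12}`: `q`-th column `(1/2)ℳ_{12}^{(0)} + Σ_{s=1}^{q−1} ℳ_{12}^{(−s)}`. -/
def K12 (m n : ℕ) (t : ℤ → ℤ → ℂ) : Matrix (Fin m) (Fin n) ℂ :=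
  Matrix.of fun j q => (1 / 2 : ℂ) * m12e m t 0 j
    + ∑ s ∈ Finset.range (q : ℕ), m12e m t (-((s : ℤ) + 1)) j

/-- `Π_1 = [M_{11} M_{31}]`. -/
def Pi1 (m n : ℕ) (t : ℤ → ℤ → ℂ) : Matrix (Fin n × Fin m) (Fin m ⊕ Fin m) ℂ :=
  fromCols (M11 m n t) (M31 m n)

/-- `Π_2 = [M_{12} M_{32}]`. -/
def Pi2 (m n : ℕ) (t : ℤ → ℤ → ℂ) : Matrix (Fin n × Fin m) (Fin n ⊕ Fin n) ℂ :=
  fromCols (M12 m n t) (M32 m n)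

/-- `Π̂_1 = col[M_{21}; M_{41}]`. -/
def PiHat1 (m n : ℕ) (t : ℤ → ℤ → ℂ) : Matrix (Fin m ⊕ Fin m) (Fin n × Fin m) ℂ :=
  fromRows (M21 m n) (M41 m n t)

/-- `Π̂_2 = col[M_{22}; M_{42}]`. -/
def PiHat2 (m n : ℕ) (t : ℤ → ℤ → ℂ) : Matrix (Fin n ⊕ Fin n) (Fin n × Fin m) ℂ :=
  fromRows (M22 m n) (M42 m n t)

/-- All-ones vector. -/
def onesV (k : Type*) : k → ℂ := fun _ => 1

/-- `g_{12} = i·Π̂_1 T^{-1} Π_2 − i·[[𝟏_m 𝟏_n^*, 0],[K_{12}, 0]]`. -/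
def g12M (m n : ℕ) (t : ℤ → ℤ → ℂ) : Matrix (Fin m ⊕ Fin m) (Fin n ⊕ Fin n) ℂ :=
  Complex.I • (PiHat1 m n t * (TBT m n t)⁻¹ * Pi2 m n t)
    - Complex.I • fromBlocks (vecMulVec (onesV (Fin m)) (onesV (Fin n))) 0 (K12 m n t) 0

/-- `g_{21} = i·Π̂_2 T^{-1} Π_1 − i·[[𝟏_n 𝟏_m^*, 0],[K_{11}, 0]]`. -/
def g21M (m n : ℕ) (t : ℤ → ℤ → ℂ) : Matrix (Fin n ⊕ Fin n) (Fin m ⊕ Fin m) ℂ :=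
  Complex.I • (PiHat2 m n t * (TBT m n t)⁻¹ * Pi1 m n t)
    - Complex.I • fromBlocks (vecMulVec (onesV (Fin n)) (onesV (Fin m))) 0 (K11 m n t) 0

/-- The `k×k` flip (anti-diagonal) matrix. -/
def flipU (k : ℕ) : Matrix (Fin k) (Fin k) ℂ :=
  Matrix.of fun p q => if (p : ℕ) + (q : ℕ) + 1 = k then 1 else 0

/-- `U_{2k}`, the `2k×2k` flip matrix on the sum type. -/
def U2 (k : ℕ) : Matrix (Fin k ⊕ Fin k) (Fin k ⊕ Fin k) ℂ :=
  fromBlocks 0 (flipU k) (flipU k) 0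

/-- `J_{2k} = diag{I_k, −I_k}`. -/
def J2 (k : ℕ) : Matrix (Fin k ⊕ Fin k) (Fin k ⊕ Fin k) ℂ :=
  fromBlocks 1 0 0 (-1)

/-- `U = U_{mn}`, the `mn×mn` flip matrix (global index `m·p + j`). -/
def UmnM (m n : ℕ) : Matrix (Fin n × Fin m) (Fin n × Fin m) ℂ :=
  Matrix.of fun r c =>
    if m * (r.1 : ℕ) + (r.2 : ℕ) + (m * (c.1 : ℕ) + (c.2 : ℕ)) + 1 = m * n then 1 else 0

/-- `ψ(λ) = (λ + i/2)/(λ − i/2)`. -/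
def psiM (l : ℂ) : ℂ := (l + Complex.I / 2) / (l - Complex.I / 2)

/-- `h(y_1, y_2)`, entry `y_1^{p−1} y_2^{j−1}`. -/
def hVec (m n : ℕ) (y1 y2 : ℂ) : (Fin n × Fin m) → ℂ :=
  fun r => y1 ^ (r.1 : ℕ) * y2 ^ (r.2 : ℕ)

/-- `ω(λ,μ) = 𝟏^*(A_1^*−μ_1)^{-1}(A_2^*−μ_2)^{-1}T^{-1}(A_2−λ_2)^{-1}(A_1−λ_1)^{-1}𝟏`. -/
def omegaF (m n : ℕ) (t : ℤ → ℤ → ℂ) (l1 l2 u1 u2 : ℂ) : ℂ :=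
  star (onesV (Fin n × Fin m)) ⬝ᵥ
    ((((A1 m n)ᴴ - u1 • 1)⁻¹ * ((A2 m n)ᴴ - u2 • 1)⁻¹ * (TBT m n t)⁻¹ *
      (A2 m n - l2 • 1)⁻¹ * (A1 m n - l1 • 1)⁻¹) *ᵥ onesV (Fin n × Fin m))

/-- `ρ(y,z) = h(conj z_1, conj z_2)^* T^{-1} h(y_1,y_2)`. -/
def rhoF (m n : ℕ) (t : ℤ → ℤ → ℂ) (y1 y2 z1 z2 : ℂ) : ℂ :=
  star (hVec m n ((starRingEnd ℂ) z1) ((starRingEnd ℂ) z2)) ⬝ᵥ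
    ((TBT m n t)⁻¹ *ᵥ hVec m n y1 y2)

/-- `Γ_1 = T^{-1}Π_1`. -/
def Gam1 (m n : ℕ) (t : ℤ → ℤ → ℂ) : Matrix (Fin n × Fin m) (Fin m ⊕ Fin m) ℂ :=
  (TBT m n t)⁻¹ * Pi1 m n t

/-- `Γ_2 = T^{-1}Π_2`. -/
def Gam2 (m n : ℕ) (t : ℤ → ℤ → ℂ) : Matrix (Fin n × Fin m) (Fin n ⊕ Fin n) ℂ :=
  (TBT m n t)⁻¹ * Pi2 m n t

/-- `Γ̂_1 = Π̂_1 T^{-1}`. -/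
def GamHat1 (m n : ℕ) (t : ℤ → ℤ → ℂ) : Matrix (Fin m ⊕ Fin m) (Fin n × Fin m) ℂ :=
  PiHat1 m n t * (TBT m n t)⁻¹

/-- `Γ̂_2 = Π̂_2 T^{-1}`. -/
def GamHat2 (m n : ℕ) (t : ℤ → ℤ → ℂ) : Matrix (Fin n ⊕ Fin n) (Fin n × Fin m) ℂ :=
  PiHat2 m n t * (TBT m n t)⁻¹

/-- `Γ = [Γ_1 Γ_2]`. -/
def GammaFull (m n : ℕ) (t : ℤ → ℤ → ℂ) :
    Matrix (Fin n × Fin m) ((Fin m ⊕ Fin m) ⊕ (Fin n ⊕ Fin n)) ℂ :=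
  fromCols (Gam1 m n t) (Gam2 m n t)

/-- `Γ̂ = col[Γ̂_1; Γ̂_2]`. -/
def GammaHatFull (m n : ℕ) (t : ℤ → ℤ → ℂ) :
    Matrix ((Fin m ⊕ Fin m) ⊕ (Fin n ⊕ Fin n)) (Fin n × Fin m) ℂ :=
  fromRows (GamHat1 m n t) (GamHat2 m n t)

/-- The row vector `u(μ)`. -/
def uRow (m n : ℕ) (t : ℤ → ℤ → ℂ) (u1 u2 : ℂ) :
    ((Fin m ⊕ Fin m) ⊕ (Fin n ⊕ Fin n)) → ℂ :=
  star (onesV (Fin n × Fin m)) ᵥ*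
      (((A1 m n)ᴴ - u1 • 1)⁻¹ * ((A2 m n)ᴴ - u2 • 1)⁻¹ * GammaFull m n t)
    - Complex.I • Sum.elim
        (Sum.elim (star (onesV (Fin m)) ᵥ* ((calA2 m)ᴴ - u2 • 1)⁻¹) (0 : Fin m → ℂ))
        (Sum.elim (star (onesV (Fin n)) ᵥ* ((calA1 n)ᴴ - u1 • 1)⁻¹) (0 : Fin n → ℂ))

/-- The column vector `û(λ)`. -/
def uHatCol (m n : ℕ) (t : ℤ → ℤ → ℂ) (l1 l2 : ℂ) :
    ((Fin m ⊕ Fin m) ⊕ (Fin n ⊕ Fin n)) → ℂ :=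
  (GammaHatFull m n t * (A2 m n - l2 • 1)⁻¹ * (A1 m n - l1 • 1)⁻¹) *ᵥ onesV (Fin n × Fin m)
    + Complex.I • Sum.elim
        (Sum.elim (0 : Fin m → ℂ) ((calA2 m - l2 • 1)⁻¹ *ᵥ onesV (Fin m)))
        (Sum.elim (0 : Fin n → ℂ) ((calA1 n - l1 • 1)⁻¹ *ᵥ onesV (Fin n)))

/-- `P_1 = diag{I_{2m}, 0}`. -/
def P1M (m n : ℕ) :
    Matrix ((Fin m ⊕ Fin m) ⊕ (Fin n ⊕ Fin n)) ((Fin m ⊕ Fin m) ⊕ (Fin n ⊕ Fin n)) ℂ :=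
  fromBlocks 1 0 0 0

/-- `P_2 = I − P_1`. -/
def P2M (m n : ℕ) :
    Matrix ((Fin m ⊕ Fin m) ⊕ (Fin n ⊕ Fin n)) ((Fin m ⊕ Fin m) ⊕ (Fin n ⊕ Fin n)) ℂ :=
  1 - P1M m n

/-- `G(λ)`, built from `g_{12}` and `g_{21}`. -/
def GMat (m n : ℕ) (g12 : Matrix (Fin m ⊕ Fin m) (Fin n ⊕ Fin n) ℂ)
    (g21 : Matrix (Fin n ⊕ Fin n) (Fin m ⊕ Fin m) ℂ) (l1 l2 : ℂ) :
    Matrix ((Fin m ⊕ Fin m) ⊕ (Fin n ⊕ Fin n)) ((Fin m ⊕ Fin m) ⊕ (Fin n ⊕ Fin n)) ℂ :=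
  fromBlocks (fromBlocks (calA2 m - l2 • 1) 0 0 (calA2 m - l2 • 1)) g12
             g21 (fromBlocks (calA1 n - l1 • 1) 0 0 (calA1 n - l1 • 1))

/-- `G` as a matrix over the polynomial ring `ℂ[λ_1, λ_2]` (variables `X 0 = λ_1`, `X 1 = λ_2`). -/
def GPoly (m n : ℕ) (g12 : Matrix (Fin m ⊕ Fin m) (Fin n ⊕ Fin n) ℂ)
    (g21 : Matrix (Fin n ⊕ Fin n) (Fin m ⊕ Fin m) ℂ) :
    Matrix ((Fin m ⊕ Fin m) ⊕ (Fin n ⊕ Fin n)) ((Fin m ⊕ Fin m) ⊕ (Fin n ⊕ Fin n))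
      (MvPolynomial (Fin 2) ℂ) :=
  fromBlocks
    (fromBlocks ((calA2 m).map MvPolynomial.C - (MvPolynomial.X 1 : MvPolynomial (Fin 2) ℂ) • 1) 0 0
      ((calA2 m).map MvPolynomial.C - (MvPolynomial.X 1 : MvPolynomial (Fin 2) ℂ) • 1))
    (g12.map MvPolynomial.C)
    (g21.map MvPolynomial.C)
    (fromBlocks ((calA1 n).map MvPolynomial.C - (MvPolynomial.X 0 : MvPolynomial (Fin 2) ℂ) • 1) 0 0
      ((calA1 n).map MvPolynomial.C - (MvPolynomial.X 0 : MvPolynomial (Fin 2) ℂ) • 1))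

/-- The vector `col[0_m; 𝟏_m; 0_n; 𝟏_n]`. -/
def eVec (m n : ℕ) : ((Fin m ⊕ Fin m) ⊕ (Fin n ⊕ Fin n)) → ℂ :=
  Sum.elim (Sum.elim (0 : Fin m → ℂ) (onesV (Fin m))) (Sum.elim (0 : Fin n → ℂ) (onesV (Fin n)))

/-- `diag{J_{2m}U_{2m}, J_{2n}U_{2n}}`. -/
def DJU (m n : ℕ) :
    Matrix ((Fin m ⊕ Fin m) ⊕ (Fin n ⊕ Fin n)) ((Fin m ⊕ Fin m) ⊕ (Fin n ⊕ Fin n)) ℂ :=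
  fromBlocks (J2 m * U2 m) 0 0 (J2 n * U2 n)

/-- The block column `col[I_m; I_m; …; I_m]`. -/
def EcolId (m n : ℕ) : Matrix (Fin n × Fin m) (Fin m) ℂ :=
  Matrix.of fun r l => if r.2 = l then 1 else 0

/-! Both resolvents act on `𝟏` through geometric vectors. With `ψ(λ) = (λ + i/2)/(λ - i/2)`, the
lower triangular Toeplitz matrix `𝒜 = {a_{j-ℓ}}` satisfies `(𝒜 - λ)(1, ψ, ψ², …) = (i/2 - λ) 𝟏`, and
`A_1 = 𝒜_1 ⊗ I_m`, `A_2 = I_n ⊗ 𝒜_2`. Hence `(A_2 - λ_2)⁻¹(A_1 - λ_1)⁻¹ 𝟏` is a nonzero multiple of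
`h(ψ(λ_1), ψ(λ_2))`, and the hypothesis says `h(y)^* (R - R') h(z) = 0` for all `y, z` in the range
of `ψ`. Choosing `λ = 0, 1, 2, …` gives distinct nodes `ψ(λ)` (`ψ` is a Möbius map), so the vectors
`h` form an invertible Kronecker product `V` of Vandermonde matrices and `V^* R V = V^* R' V`. -/

open Kronecker Complex

lemma psiM_sub_one {l : ℂ} (hl : l ≠ I / 2) : psiM l - 1 = I / (l - I / 2) := by
  rw [psiM, div_sub_one (sub_ne_zero.mpr hl)]
  ring_nf

lemma psiM_injOn : Set.InjOn psiM {I / 2}ᶜ := by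
  intro a ha b hb hab
  have h := congrArg (· - 1) hab
  simp only [psiM_sub_one ha, psiM_sub_one hb] at h
  rw [div_eq_div_iff (sub_ne_zero.mpr ha) (sub_ne_zero.mpr hb)] at h
  linear_combination (mul_left_cancel₀ I_ne_zero h).symm

lemma calA1_sub_smul_apply (k : ℕ) (l : ℂ) (j i : Fin k) :
    (calA1 k - l • 1) j i = (if i < j then I else 0) + (if i = j then I / 2 - l else 0) := by
  simp only [Matrix.sub_apply, Matrix.smul_apply, one_apply, calA1, of_apply, aC, smul_eq_mul,
    Fin.lt_def, Fin.ext_iff]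
  split_ifs <;> first | omega | ring

lemma Fin.sum_ite_lt_eq_sum_range {M : Type*} [AddCommMonoid M] {k : ℕ} (j : Fin k)
    (f : ℕ → M) :
    ∑ i : Fin k, (if i < j then f i else 0) = ∑ i ∈ Finset.range j, f i := by
  simp only [Fin.lt_def]
  rw [Fin.sum_univ_eq_sum_range (fun i => if i < (j : ℕ) then f i else 0), ← Finset.sum_filter]
  congr 1
  ext i
  simp only [Finset.mem_filter, Finset.mem_range]
  omega

lemma calA1_sub_smul_mulVec_geom (k : ℕ) {l : ℂ} (hl : l ≠ I / 2) :
    (calA1 k - l • 1) *ᵥ (fun i : Fin k => psiM l ^ (i : ℕ)) = fun _ => I / 2 - l := by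
  have hl' : l - I / 2 ≠ 0 := sub_ne_zero.mpr hl
  have hs : psiM l ≠ 1 := sub_ne_zero.mp <| by
    rw [psiM_sub_one hl]; exact div_ne_zero I_ne_zero hl'
  funext j
  simp only [mulVec, dotProduct, calA1_sub_smul_apply, add_mul, Finset.sum_add_distrib, ite_mul,
    zero_mul, Finset.sum_ite_eq', Finset.mem_univ, if_true,
    Fin.sum_ite_lt_eq_sum_range j (fun i => I * psiM l ^ i), ← Finset.mul_sum]
  -- `ψ - 1 = i / (λ - i/2)` turns `i Σ_{s<j} ψ^s` into `(ψ^j - 1)(λ - i/2)`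
  rw [geom_sum_eq hs, psiM_sub_one hl]
  field_simp
  ring

lemma det_calA1_sub_smul (k : ℕ) (l : ℂ) : (calA1 k - l • 1).det = (I / 2 - l) ^ k := by
  have hlower : (calA1 k - l • 1).IsLowerTriangular := fun j i (hji : j < i) => by
    rw [calA1_sub_smul_apply, if_neg hji.not_gt, if_neg hji.ne', add_zero]
  simp only [det_of_isLowerTriangular _ hlower, calA1_sub_smul_apply, lt_irrefl, if_false,
    if_true, zero_add, Finset.prod_const, Finset.card_univ, Fintype.card_fin]

lemma inv_calA1_sub_smul_mulVec_onesV (k : ℕ) {l : ℂ} (hl : l ≠ I / 2) :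
    (calA1 k - l • 1)⁻¹ *ᵥ onesV (Fin k) = (I / 2 - l)⁻¹ • fun i : Fin k => psiM l ^ (i : ℕ) := by
  have hc : I / 2 - l ≠ 0 := sub_ne_zero.mpr hl.symm
  have hdet : IsUnit (calA1 k - l • 1).det := by
    rw [det_calA1_sub_smul]; exact (pow_ne_zero _ hc).isUnit
  have hones : onesV (Fin k)
      = (I / 2 - l)⁻¹ • ((calA1 k - l • 1) *ᵥ fun i : Fin k => psiM l ^ (i : ℕ)) := by
    rw [calA1_sub_smul_mulVec_geom k hl]
    funext i
    simp [onesV, hc]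
  rw [hones, mulVec_smul, mulVec_mulVec, nonsing_inv_mul _ hdet, one_mulVec]

lemma calA2_eq_calA1 : calA2 = calA1 := rfl

lemma A1_sub_smul (m n : ℕ) (l : ℂ) :
    A1 m n - l • 1 = (calA1 n - l • 1) ⊗ₖ (1 : Matrix (Fin m) (Fin m) ℂ) := by
  ext ⟨p, j⟩ ⟨q, i⟩
  by_cases hp : p = q <;> by_cases hj : j = i <;> simp [A1, calA1, one_apply, hp, hj]

lemma A2_sub_smul (m n : ℕ) (l : ℂ) :
    A2 m n - l • 1 = (1 : Matrix (Fin n) (Fin n) ℂ) ⊗ₖ (calA2 m - l • 1) := by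
  ext ⟨p, j⟩ ⟨q, i⟩
  by_cases hp : p = q <;> by_cases hj : j = i <;> simp [A2, calA2, one_apply, hp, hj]

lemma resolvent_mul_eq_kronecker (m n : ℕ) (l1 l2 : ℂ) :
    (A2 m n - l2 • 1)⁻¹ * (A1 m n - l1 • 1)⁻¹
      = (calA1 n - l1 • 1)⁻¹ ⊗ₖ (calA2 m - l2 • 1)⁻¹ := by
  rw [← Matrix.mul_inv_rev, A1_sub_smul, A2_sub_smul, ← mul_kronecker_mul, Matrix.mul_one,
    Matrix.one_mul, inv_kronecker]

lemma kronecker_mulVec_mul {R l m n p : Type*} [CommSemiring R] [Fintype m] [Fintype p]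
    (A : Matrix l m R) (B : Matrix n p R) (v : m → R) (w : p → R) :
    (A ⊗ₖ B) *ᵥ (fun x => v x.1 * w x.2) = fun y => (A *ᵥ v) y.1 * (B *ᵥ w) y.2 := by
  funext y
  simp only [mulVec, dotProduct, kroneckerMap_apply, Fintype.sum_prod_type, Finset.sum_mul_sum]
  exact Finset.sum_congr rfl fun _ _ => Finset.sum_congr rfl fun _ _ => by ring

lemma resolvent_mul_mulVec_onesV (m n : ℕ) {l1 l2 : ℂ} (hl1 : l1 ≠ I / 2) (hl2 : l2 ≠ I / 2) :
    ((A2 m n - l2 • 1)⁻¹ * (A1 m n - l1 • 1)⁻¹) *ᵥ onesV (Fin n × Fin m)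
      = ((I / 2 - l1) * (I / 2 - l2))⁻¹ • hVec m n (psiM l1) (psiM l2) := by
  have hones : onesV (Fin n × Fin m) = fun x => onesV (Fin n) x.1 * onesV (Fin m) x.2 := by
    funext x; simp [onesV]
  rw [resolvent_mul_eq_kronecker, hones, kronecker_mulVec_mul, calA2_eq_calA1,
    inv_calA1_sub_smul_mulVec_onesV n hl1, inv_calA1_sub_smul_mulVec_onesV m hl2]
  funext x
  simp only [hVec, Pi.smul_apply, smul_eq_mul, mul_inv]
  ring

lemma conjTranspose_sub_star_smul_one {ι : Type*} [Fintype ι] [DecidableEq ι]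
    (A : Matrix ι ι ℂ) (k : ℂ) : Aᴴ - star k • 1 = (A - k • 1)ᴴ := by
  rw [conjTranspose_sub, conjTranspose_smul, conjTranspose_one]

lemma exists_ne_zero_forall_omega_form_eq (m n : ℕ) {k1 k2 l1 l2 : ℂ} (hk1 : k1 ≠ I / 2)
    (hk2 : k2 ≠ I / 2) (hl1 : l1 ≠ I / 2) (hl2 : l2 ≠ I / 2) :
    ∃ c : ℂ, c ≠ 0 ∧ ∀ S : Matrix (Fin n × Fin m) (Fin n × Fin m) ℂ,
      star (onesV (Fin n × Fin m)) ⬝ᵥ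
          ((((A1 m n)ᴴ - star k1 • 1)⁻¹ * ((A2 m n)ᴴ - star k2 • 1)⁻¹ * S *
            (A2 m n - l2 • 1)⁻¹ * (A1 m n - l1 • 1)⁻¹) *ᵥ onesV (Fin n × Fin m))
        = c * (star (hVec m n (psiM k1) (psiM k2)) ⬝ᵥ (S *ᵥ hVec m n (psiM l1) (psiM l2))) := by
  have hc : ∀ {a b : ℂ}, a ≠ I / 2 → b ≠ I / 2 → ((I / 2 - a) * (I / 2 - b))⁻¹ ≠ 0 :=
    fun ha hb => inv_ne_zero (mul_ne_zero (sub_ne_zero.mpr ha.symm) (sub_ne_zero.mpr hb.symm))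
  refine ⟨star ((I / 2 - k1) * (I / 2 - k2))⁻¹ * ((I / 2 - l1) * (I / 2 - l2))⁻¹,
    mul_ne_zero (star_ne_zero.mpr (hc hk1 hk2)) (hc hl1 hl2), fun S => ?_⟩
  rw [conjTranspose_sub_star_smul_one, conjTranspose_sub_star_smul_one,
    ← conjTranspose_nonsing_inv, ← conjTranspose_nonsing_inv, ← conjTranspose_mul,
    Matrix.mul_assoc, Matrix.mul_assoc, ← mulVec_mulVec, ← mulVec_mulVec,
    dotProduct_mulVec, ← star_mulVec, resolvent_mul_mulVec_onesV m n hl1 hl2,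
    resolvent_mul_mulVec_onesV m n hk1 hk2, mulVec_smul, star_smul, smul_dotProduct,
    dotProduct_smul, smul_eq_mul, smul_eq_mul, mul_assoc]

lemma eq_of_conjTranspose_mul_mul_eq {R ι : Type*} [CommRing R] [StarRing R] [Fintype ι]
    [DecidableEq ι] {V A B : Matrix ι ι R} (hV : IsUnit V.det) (h : Vᴴ * A * V = Vᴴ * B * V) :
    A = B := by
  have hV' : IsUnit V := (isUnit_iff_isUnit_det V).mpr hV
  exact hV'.star.mul_left_cancel (hV'.mul_right_cancel h)

lemma conjTranspose_mul_mul_apply {R ι κ : Type*} [CommSemiring R] [StarRing R] [Fintype ι]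
    (V : Matrix ι κ R) (S : Matrix ι ι R) (a b : κ) :
    (Vᴴ * S * V) a b = star (fun r => V r a) ⬝ᵥ (S *ᵥ fun r => V r b) := by
  simp only [mul_apply, conjTranspose_apply, dotProduct, mulVec, Pi.star_apply, Finset.sum_mul,
    Finset.mul_sum, mul_assoc]
  exact Finset.sum_comm

lemma natCast_ne_I_div_two (p : ℕ) : (p : ℂ) ≠ I / 2 := fun h => by
  simpa using congrArg Complex.im h

lemma psiM_natCast_injective : Function.Injective fun p : ℕ => psiM p :=
  fun _ _ h => Nat.cast_injective (psiM_injOn (natCast_ne_I_div_two _) (natCast_ne_I_div_two _) h)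

lemma eq_of_forall_star_hVec_dotProduct_mulVec_hVec_eq {m n : ℕ}
    {R R' : Matrix (Fin n × Fin m) (Fin n × Fin m) ℂ}
    (h : ∀ k1 k2 l1 l2 : ℂ, k1 ≠ I / 2 → k2 ≠ I / 2 → l1 ≠ I / 2 → l2 ≠ I / 2 →
      star (hVec m n (psiM k1) (psiM k2)) ⬝ᵥ (R *ᵥ hVec m n (psiM l1) (psiM l2))
        = star (hVec m n (psiM k1) (psiM k2)) ⬝ᵥ (R' *ᵥ hVec m n (psiM l1) (psiM l2))) :
    R = R' := by
  have hdet : ∀ k, (vandermonde fun p : Fin k => psiM (p : ℕ)).det ≠ 0 := fun k =>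
    det_vandermonde_ne_zero_iff.mpr (psiM_natCast_injective.comp Fin.val_injective)
  set V := (vandermonde (fun p : Fin n => psiM (p : ℕ)) ⊗ₖ
    vandermonde (fun j : Fin m => psiM (j : ℕ)))ᵀ
  have hV : IsUnit V.det := by
    rw [det_transpose, det_kronecker]
    exact (mul_ne_zero (pow_ne_zero _ (hdet n)) (pow_ne_zero _ (hdet m))).isUnit
  refine eq_of_conjTranspose_mul_mul_eq hV (ext fun a b => ?_)
  rw [conjTranspose_mul_mul_apply, conjTranspose_mul_mul_apply]
  exact h _ _ _ _ (natCast_ne_I_div_two _) (natCast_ne_I_div_two _) (natCast_ne_I_div_two _)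
    (natCast_ne_I_div_two _)

theorem R_unique_from_omega_general (m n : ℕ)
    (R R' : Matrix (Fin n × Fin m) (Fin n × Fin m) ℂ)
    (h : ∀ l1 l2 u1 u2 : ℂ, l1 ≠ Complex.I / 2 → l2 ≠ Complex.I / 2 →
      u1 ≠ -(Complex.I / 2) → u2 ≠ -(Complex.I / 2) →
      star (onesV (Fin n × Fin m)) ⬝ᵥ
          ((((A1 m n)ᴴ - u1 • 1)⁻¹ * ((A2 m n)ᴴ - u2 • 1)⁻¹ * R *
            (A2 m n - l2 • 1)⁻¹ * (A1 m n - l1 • 1)⁻¹) *ᵥ onesV (Fin n × Fin m))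
        = star (onesV (Fin n × Fin m)) ⬝ᵥ
          ((((A1 m n)ᴴ - u1 • 1)⁻¹ * ((A2 m n)ᴴ - u2 • 1)⁻¹ * R' *
            (A2 m n - l2 • 1)⁻¹ * (A1 m n - l1 • 1)⁻¹) *ᵥ onesV (Fin n × Fin m))) :
    R = R' := by
  have hstar : ∀ {k : ℂ}, k ≠ I / 2 → star k ≠ -(I / 2) := fun hk h' =>
    hk (by simpa [neg_div] using congrArg star h')
  refine eq_of_forall_star_hVec_dotProduct_mulVec_hVec_eq fun k1 k2 l1 l2 hk1 hk2 hl1 hl2 => ?_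
  obtain ⟨c, hc, hform⟩ := exists_ne_zero_forall_omega_form_eq m n hk1 hk2 hl1 hl2
  have hω := h l1 l2 (star k1) (star k2) hl1 hl2 (hstar hk1) (hstar hk2)
  rw [hform, hform] at hω
  exact mul_left_cancel₀ hc hω

/-- uniqueness part of Lemma 3.2: `ω` determines `R` uniquely. -/
theorem R_unique_from_omega (m n : ℕ) (hm : 0 < m) (hn : 0 < n)
    (R R' : Matrix (Fin n × Fin m) (Fin n × Fin m) ℂ)
    (h : ∀ l1 l2 u1 u2 : ℂ, l1 ≠ Complex.I / 2 → l2 ≠ Complex.I / 2 →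
      u1 ≠ -(Complex.I / 2) → u2 ≠ -(Complex.I / 2) →
      star (onesV (Fin n × Fin m)) ⬝ᵥ
          ((((A1 m n)ᴴ - u1 • 1)⁻¹ * ((A2 m n)ᴴ - u2 • 1)⁻¹ * R *
            (A2 m n - l2 • 1)⁻¹ * (A1 m n - l1 • 1)⁻¹) *ᵥ onesV (Fin n × Fin m))
        = star (onesV (Fin n × Fin m)) ⬝ᵥ
          ((((A1 m n)ᴴ - u1 • 1)⁻¹ * ((A2 m n)ᴴ - u2 • 1)⁻¹ * R' *
            (A2 m n - l2 • 1)⁻¹ * (A1 m n - l1 • 1)⁻¹) *ᵥ onesV (Fin n × Fin m))) :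
    R = R' :=
  R_unique_from_omega_general m n R R' h

end
end

section
/- (Final step of Theorem 3.3, p = 1) Let T be any mn×mn complex matrix and suppose there exist an mn×m matrix M and an m×mn matrix N such that A_1 T − T A_1^* = i·(M·M_{21} + M_{31}·N), where M_{21} = [I_m I_m … I_m] and M_{31} = M_{21}^*. Then T is block Toeplitz: writing T = {T_{pq}}_{p,q=1}^n with m×m blocks, T_{pq} = T_{p'q'} whenever p − q = p' − q'. -/
open Matrix

noncomputable section

/-! Dividing the identity by `i` and reading off the `((P, j), (Q, l))` entry gives
`T_PQ + ∑_{s<P} T_sQ + ∑_{s<Q} T_Ps = M_P + N_Q` (entries `j, l` fixed), since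
`A_1 = i (L + 1/2) ⊗ I_m` with `L` the strictly lower triangular all-ones matrix. The mixed second
difference in `(P, Q)` annihilates the right-hand side, while on the left the partial sums
telescope and leave `T_{P+1,Q+1} - T_PQ`. Hence `T` is constant along block diagonals. -/

open Finset

theorem Fin.sum_Iio_eq_add_sum_Iio {R : Type*} [AddCommMonoid R] {n : ℕ} (y : Fin n → R)
    {P P' : Fin n} (h : (P' : ℕ) + 1 = P) :
    ∑ s ∈ Iio P, y s = y P' + ∑ s ∈ Iio P', y s := by
  have : Iio P = Iic P' := by
    ext s
    simp only [mem_Iio, mem_Iic, Fin.lt_def, Fin.le_def]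
    omega
  rw [this, Iic_eq_cons_Iio, Finset.sum_cons]

theorem apply_eq_of_add_sum_Iio_eq_add {R : Type*} [AddCommGroup R] {n : ℕ}
    {f : Fin n → Fin n → R} {a b : Fin n → R}
    (hf : ∀ P Q, f P Q + ∑ s ∈ Iio P, f s Q + ∑ s ∈ Iio Q, f P s = a P + b Q)
    {P Q P' Q' : Fin n} (hP : (P' : ℕ) + 1 = P) (hQ : (Q' : ℕ) + 1 = Q) :
    f P Q = f P' Q' := by
  have e1 := hf P Q
  have e2 := hf P' Q
  have e3 := hf P Q'
  have e4 := hf P' Q'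
  rw [Fin.sum_Iio_eq_add_sum_Iio _ hP, Fin.sum_Iio_eq_add_sum_Iio _ hQ] at e1
  rw [Fin.sum_Iio_eq_add_sum_Iio _ hQ] at e2
  rw [Fin.sum_Iio_eq_add_sum_Iio _ hP] at e3
  linear_combination (norm := abel) e1 - e2 - e3 + e4

theorem apply_eq_of_sub_eq_of_apply_succ_succ {α : Type*} {n : ℕ} {f : Fin n → Fin n → α}
    (hf : ∀ P Q P' Q' : Fin n, (P' : ℕ) + 1 = P → (Q' : ℕ) + 1 = Q → f P Q = f P' Q')
    {p q p' q' : Fin n} (h : (p : ℤ) - q = (p' : ℤ) - q') : f p q = f p' q' := by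
  have shift : ∀ k : ℕ, ∀ a b a' b' : Fin n, (a' : ℕ) = a + k → (b' : ℕ) = b + k →
      f a' b' = f a b := by
    intro k
    induction k with
    | zero => intro a b a' b' ha hb; rw [Fin.ext ha, Fin.ext hb]
    | succ k ih =>
      intro a b a' b' ha hb
      rw [hf a' b' ⟨a + k, by omega⟩ ⟨b + k, by omega⟩ (by rw [ha]; rfl) (by rw [hb]; rfl)]
      exact ih a b _ _ rfl rfl
  rcases le_total (p : ℕ) p' with hle | hle
  · exact (shift (p' - p) p q p' q' (by omega) (by omega)).symm
  · exact shift (p - p') p' q' p q (by omega) (by omega)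

theorem star_aC (r : ℤ) : star (aC r) = -aC r := by
  unfold aC; split_ifs <;> simp [div_eq_mul_inv]

theorem sum_aC_sub_mul {n : ℕ} (p : Fin n) (y : Fin n → ℂ) :
    ∑ s : Fin n, aC ((p : ℕ) - (s : ℕ)) * y s =
      Complex.I * (y p / 2 + ∑ s ∈ Iio p, y s) := by
  have pointwise : ∀ s : Fin n, aC ((p : ℕ) - (s : ℕ)) * y s
      = (if s < p then Complex.I * y s else 0) + (if p = s then Complex.I / 2 * y s else 0) := by
    intro s
    rcases lt_trichotomy s p with hsp | rfl | hps
    · have : 0 < (p : ℤ) - (s : ℕ) := by rw [Fin.lt_def] at hsp; omega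
      simp [aC, hsp, hsp.ne', this.not_gt, this.ne']
    · simp [aC]
    · have : (p : ℤ) - (s : ℕ) < 0 := by rw [Fin.lt_def] at hps; omega
      simp [aC, hps.not_gt, hps.ne, this]
  rw [sum_congr rfl fun s _ => pointwise s, sum_add_distrib, sum_ite_eq, ← sum_filter,
    filter_gt_eq_Iio, ← mul_sum]
  simp only [mem_univ, if_true]
  ring

section entries

variable {m n : ℕ} {ι : Type*}

theorem A1_mul_apply (T : Matrix (Fin n × Fin m) ι ℂ) (P : Fin n) (j : Fin m) (c : ι) :
    (A1 m n * T) (P, j) c = Complex.I * (T (P, j) c / 2 + ∑ s ∈ Iio P, T (s, j) c) := by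
  simp only [mul_apply, A1, of_apply, Fintype.sum_prod_type, ite_mul, zero_mul, sum_ite_eq,
    mem_univ, if_true]
  exact sum_aC_sub_mul P fun s => T (s, j) c

theorem mul_A1_conjTranspose_apply [Fintype ι] (T : Matrix ι (Fin n × Fin m) ℂ) (r : ι)
    (Q : Fin n) (l : Fin m) :
    (T * (A1 m n)ᴴ) r (Q, l) = -Complex.I * (T r (Q, l) / 2 + ∑ s ∈ Iio Q, T r (s, l)) := by
  simp only [mul_apply, conjTranspose_apply, A1, of_apply, Fintype.sum_prod_type, apply_ite star,
    star_zero, star_aC, mul_ite, mul_zero, sum_ite_eq, mem_univ, if_true, mul_neg,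
    sum_neg_distrib, neg_mul]
  rw [← sum_aC_sub_mul Q fun s => T r (s, l)]
  simp only [mul_comm]

theorem mul_M21_apply (M : Matrix ι (Fin m) ℂ) (r : ι) (c : Fin n × Fin m) :
    (M * M21 m n) r c = M r c.2 := by
  simp [mul_apply, M21]

theorem M31_mul_apply (N : Matrix (Fin m) ι ℂ) (r : Fin n × Fin m) (c : ι) :
    (M31 m n * N) r c = N r.2 c := by
  simp [mul_apply, M31, M21]

end entries

theorem block_toeplitz_from_identity_general (m n : ℕ)
    (T : Matrix (Fin n × Fin m) (Fin n × Fin m) ℂ)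
    (M : Matrix (Fin n × Fin m) (Fin m) ℂ) (N : Matrix (Fin m) (Fin n × Fin m) ℂ)
    (h : A1 m n * T - T * (A1 m n)ᴴ = Complex.I • (M * M21 m n + M31 m n * N)) :
    ∀ p q p' q' : Fin n,
      ((p : ℕ) : ℤ) - ((q : ℕ) : ℤ) = ((p' : ℕ) : ℤ) - ((q' : ℕ) : ℤ) →
      ∀ j l : Fin m, T (p, j) (q, l) = T (p', j) (q', l) := by
  intro p q p' q' hpq j l
  have partial_sums : ∀ P Q : Fin n,
      T (P, j) (Q, l) + ∑ s ∈ Iio P, T (s, j) (Q, l) + ∑ s ∈ Iio Q, T (P, j) (s, l)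
        = M (P, j) l + N j (Q, l) := by
    intro P Q
    have entry := Matrix.ext_iff.mpr h (P, j) (Q, l)
    simp only [Matrix.sub_apply, A1_mul_apply, mul_A1_conjTranspose_apply, Matrix.smul_apply,
      Matrix.add_apply, mul_M21_apply, M31_mul_apply, smul_eq_mul] at entry
    refine mul_left_cancel₀ Complex.I_ne_zero ?_
    linear_combination entry
  exact apply_eq_of_sub_eq_of_apply_succ_succ
    (fun P Q P' Q' hP hQ => apply_eq_of_add_sum_Iio_eq_add partial_sums hP hQ) hpq

/-- final step of Theorem 3.3, p = 1: the identity with `M_{21}`, `M_{31}`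
forces `T` to be block Toeplitz. -/
theorem block_toeplitz_from_identity (m n : ℕ) (hm : 0 < m) (hn : 0 < n)
    (T : Matrix (Fin n × Fin m) (Fin n × Fin m) ℂ)
    (M : Matrix (Fin n × Fin m) (Fin m) ℂ) (N : Matrix (Fin m) (Fin n × Fin m) ℂ)
    (h : A1 m n * T - T * (A1 m n)ᴴ = Complex.I • (M * M21 m n + M31 m n * N)) :
    ∀ p q p' q' : Fin n,
      ((p : ℕ) : ℤ) - ((q : ℕ) : ℤ) = ((p' : ℕ) : ℤ) - ((q' : ℕ) : ℤ) →
      ∀ j l : Fin m, T (p, j) (q, l) = T (p', j) (q', l) :=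
  block_toeplitz_from_identity_general m n T M N h

end
end

section
/- (Final step of Theorem 3.3, p = 2) Let T be any mn×mn complex matrix and suppose there exist an mn×n matrix M and an n×mn matrix N such that A_2 T − T A_2^* = i·(M·M_{22} + M_{32}·N), where M_{22} is the n×mn block matrix {ℳ^{(p−q)}}_{p,q=1}^n with 1×m blocks ℳ^{(0)} = 𝟏_m^* and ℳ^{(r)} = 0 for r ≠ 0, and M_{32} = M_{22}^*. Then, partitioning T = {T_{pq}}_{p,q=1}^n into m×m blocks, every block T_{pq} is a Toeplitz matrix (its (j,ℓ) entry depends only on j − ℓ). -/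
open Matrix

noncomputable section

/-!
Restricted to the block `(p, q)`, the identity says that the displacement `𝒜 X - X 𝒜^*` of the
block `X` (with `𝒜 = 𝒜_{2,0}`) is `i (μ_a + ν_b)`, whose mixed second difference vanishes.
Consecutive rows of `𝒜` differ by `(i/2)(e_a + e_{a+1})`, so the mixed second difference of
`𝒜 X - X 𝒜^*` at `(a, b)` is `i (X_{a+1,b+1} - X_{a,b})`: the block is constant along diagonals.
-/

lemma aC_add_one_sub (r : ℤ) :
    aC (r + 1) - aC r
      = (if r = 0 then Complex.I / 2 else 0) + (if r = -1 then Complex.I / 2 else 0) := by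
  unfold aC
  split_ifs <;> first | (exfalso; omega) | ring

section Toeplitz

variable {m : ℕ}

def Matrix.IsToeplitz {α : Type*} (X : Matrix (Fin m) (Fin m) α) : Prop :=
  ∀ j l j' l' : Fin m, ((j : ℕ) : ℤ) - ((l : ℕ) : ℤ) = ((j' : ℕ) : ℤ) - ((l' : ℕ) : ℤ) →
    X j l = X j' l'

lemma Matrix.isToeplitz_of_apply_succ {α : Type*} (X : Matrix (Fin m) (Fin m) α)
    (hX : ∀ a b a' b' : Fin m, (a' : ℕ) = a + 1 → (b' : ℕ) = b + 1 → X a' b' = X a b) :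
    X.IsToeplitz := by
  have shift : ∀ (k : ℕ) (a b a' b' : Fin m), (a' : ℕ) = a + k → (b' : ℕ) = b + k →
      X a' b' = X a b := by
    intro k
    induction k with
    | zero =>
      intro a b a' b' ha hb
      rw [Fin.ext ha, Fin.ext hb]
    | succ k ih =>
      intro a b a' b' ha hb
      rw [hX ⟨a + k, by omega⟩ ⟨b + k, by omega⟩ a' b' (by rw [ha]; rfl) (by rw [hb]; rfl)]
      exact ih a b _ _ rfl rfl
  intro j l j' l' hdiff
  rcases le_total (j : ℕ) j' with hj | hj
  · exact (shift ((j' : ℕ) - j) j l j' l' (by omega) (by omega)).symm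
  · exact shift ((j : ℕ) - j') j' l' j l (by omega) (by omega)

lemma calA2_mul_apply_succ_sub (X : Matrix (Fin m) (Fin m) ℂ) {a a' : Fin m}
    (ha : (a' : ℕ) = a + 1) (c : Fin m) :
    (calA2 m * X) a' c - (calA2 m * X) a c = Complex.I / 2 * (X a c + X a' c) := by
  have hcoeff : ∀ x : Fin m,
      aC (((a' : ℕ) : ℤ) - ((x : ℕ) : ℤ)) - aC (((a : ℕ) : ℤ) - ((x : ℕ) : ℤ)) =
        (if a = x then Complex.I / 2 else 0) + (if a' = x then Complex.I / 2 else 0) := by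
    intro x
    have hr : ((a' : ℕ) : ℤ) - ((x : ℕ) : ℤ) = (((a : ℕ) : ℤ) - ((x : ℕ) : ℤ)) + 1 := by omega
    rw [hr, aC_add_one_sub]
    congr 2 <;> simp only [Fin.ext_iff, eq_iff_iff] <;> omega
  simp only [mul_apply, calA2, of_apply, ← Finset.sum_sub_distrib, ← sub_mul, hcoeff, add_mul,
    ite_mul, zero_mul, Finset.sum_add_distrib, Finset.sum_ite_eq, Finset.mem_univ, if_true]
  ring

lemma mul_calA2_conjTranspose_apply_succ_sub (X : Matrix (Fin m) (Fin m) ℂ) {b b' : Fin m}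
    (hb : (b' : ℕ) = b + 1) (c : Fin m) :
    (X * (calA2 m)ᴴ) c b' - (X * (calA2 m)ᴴ) c b = -(Complex.I / 2) * (X c b + X c b') := by
  have h := congrArg star (calA2_mul_apply_succ_sub Xᴴ hb c)
  simp only [star_sub, star_mul', star_add, ← conjTranspose_apply, conjTranspose_mul,
    conjTranspose_conjTranspose] at h
  rw [h]
  simp [Complex.conj_I, neg_div]

lemma calA2_displacement_second_diff (X : Matrix (Fin m) (Fin m) ℂ) {a a' b b' : Fin m}
    (ha : (a' : ℕ) = a + 1) (hb : (b' : ℕ) = b + 1) :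
    let D := calA2 m * X - X * (calA2 m)ᴴ
    D a' b' - D a' b - D a b' + D a b = Complex.I * (X a' b' - X a b) := by
  simp only [Matrix.sub_apply]
  linear_combination calA2_mul_apply_succ_sub X ha b' - calA2_mul_apply_succ_sub X ha b
    - mul_calA2_conjTranspose_apply_succ_sub X hb a' + mul_calA2_conjTranspose_apply_succ_sub X hb a

lemma isToeplitz_of_calA2_displacement (X : Matrix (Fin m) (Fin m) ℂ) (μ ν : Fin m → ℂ)
    (hX : ∀ a b, (calA2 m * X - X * (calA2 m)ᴴ) a b = μ a + ν b) : X.IsToeplitz := by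
  refine X.isToeplitz_of_apply_succ fun a b a' b' ha hb => ?_
  have h := calA2_displacement_second_diff X ha hb
  simp only [hX] at h
  have hI : Complex.I * (X a' b' - X a b) = 0 := by rw [← h]; ring
  exact sub_eq_zero.mp ((mul_eq_zero.mp hI).resolve_left Complex.I_ne_zero)

end Toeplitz

lemma A2_displacement_submatrix {m n : ℕ} (T : Matrix (Fin n × Fin m) (Fin n × Fin m) ℂ)
    (p q : Fin n) :
    (A2 m n * T - T * (A2 m n)ᴴ).submatrix (Prod.mk p) (Prod.mk q)
      = calA2 m * T.submatrix (Prod.mk p) (Prod.mk q)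
        - T.submatrix (Prod.mk p) (Prod.mk q) * (calA2 m)ᴴ := by
  ext a b
  simp [mul_apply, A2, calA2, Fintype.sum_prod_type, apply_ite (starRingEnd ℂ)]

lemma mul_M22_add_M32_mul_apply {m n : ℕ} (M : Matrix (Fin n × Fin m) (Fin n) ℂ)
    (N : Matrix (Fin n) (Fin n × Fin m) ℂ) (p q : Fin n) (a b : Fin m) :
    (M * M22 m n + M32 m n * N) (p, a) (q, b) = M (p, a) q + N p (q, b) := by
  simp [mul_apply, M22, M32]

theorem toeplitz_blocks_from_identity_general (m n : ℕ)
    (T : Matrix (Fin n × Fin m) (Fin n × Fin m) ℂ)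
    (M : Matrix (Fin n × Fin m) (Fin n) ℂ) (N : Matrix (Fin n) (Fin n × Fin m) ℂ)
    (h : A2 m n * T - T * (A2 m n)ᴴ = Complex.I • (M * M22 m n + M32 m n * N)) :
    ∀ p q : Fin n, ∀ j l j' l' : Fin m,
      ((j : ℕ) : ℤ) - ((l : ℕ) : ℤ) = ((j' : ℕ) : ℤ) - ((l' : ℕ) : ℤ) →
      T (p, j) (q, l) = T (p, j') (q, l') := by
  intro p q
  refine isToeplitz_of_calA2_displacement (T.submatrix (Prod.mk p) (Prod.mk q))
    (fun a => Complex.I * M (p, a) q) (fun b => Complex.I * N p (q, b)) fun a b => ?_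
  rw [← A2_displacement_submatrix, submatrix_apply, h, Matrix.smul_apply,
    mul_M22_add_M32_mul_apply, smul_eq_mul, mul_add]

/-- final step of Theorem 3.3, p = 2: the identity with `M_{22}`, `M_{32}`
forces the blocks of `T` to be Toeplitz. -/
theorem toeplitz_blocks_from_identity (m n : ℕ) (hm : 0 < m) (hn : 0 < n)
    (T : Matrix (Fin n × Fin m) (Fin n × Fin m) ℂ)
    (M : Matrix (Fin n × Fin m) (Fin n) ℂ) (N : Matrix (Fin n) (Fin n × Fin m) ℂ)
    (h : A2 m n * T - T * (A2 m n)ᴴ = Complex.I • (M * M22 m n + M32 m n * N)) :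
    ∀ p q : Fin n, ∀ j l j' l' : Fin m,
      ((j : ℕ) : ℤ) - ((l : ℕ) : ℤ) = ((j' : ℕ) : ℤ) - ((l' : ℕ) : ℤ) →
      T (p, j) (q, l) = T (p, j') (q, l') :=
  toeplitz_blocks_from_identity_general m n T M N h

end
end
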